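/- For every integer n ≥ 1 and all z: z · (d/dz) P_n(z; β−1, α+1) = n · P_n(z; β−1, α+1) − (n(1+α)/(n−1+β)) · P_{n−1}(z; β−1, α+2). -/

import Mathlib

open Finset

/-- Pochhammer symbol `(a)_k = a (a+1) ⋯ (a+k-1)`. -/
noncomputable def poch (a : ℝ) (k : ℕ) : ℝ := ∏ i ∈ Finset.range k, (a + (i : ℝ))

/-- The Hendriksen–van Rossum polynomial `P_n(z; α, β)`. -/
noncomputable def HR (α β : ℝ) (n : ℕ) (z : ℝ) : ℝ :=
  (poch β n / poch (α + 1) n) *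
    ∑ k ∈ Finset.range (n + 1),
      poch (-(n : ℝ)) k * poch (α + 1) k /
          (poch (1 - β - (n : ℝ)) k * (Nat.factorial k : ℝ)) * z ^ k

/-- `d_m(α,β) = −(m+β)/(m+α+1)`. -/
noncomputable def dco (α β m : ℝ) : ℝ := -(m + β) / (m + α + 1)

/-- `b_m(α,β) = −m(m+α+β)/((m+α)(m+α+1))`. -/
noncomputable def bco (α β m : ℝ) : ℝ := -(m * (m + α + β)) / ((m + α) * (m + α + 1))

/-
The coefficients `c_k` of `P_n(z; β−1, α+1)` and `c'_k` of `P_{n−1}(z; β−1, α+2)` share the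
denominator `(−α−n)_k k!`, so everything reduces to `(n − k)(−n)_k = n(1−n)_k` together with
`(α+1)_n = (α+1)(α+2)_{n−1}` and `(β)_n = (β)_{n−1}(β+n−1)`: this gives
`(n − k) c_k = n(1+α)/(n−1+β) · c'_k`, and the left side is the coefficient of `z^k` in
`n P_n − z P_n'`.
-/

lemma poch_succ (a : ℝ) (k : ℕ) : poch a (k + 1) = poch a k * (a + k) :=
  prod_range_succ _ _

lemma poch_succ' (a : ℝ) (k : ℕ) : poch a (k + 1) = a * poch (a + 1) k := by
  rw [poch, prod_range_succ', poch, mul_comm]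
  push_cast
  simp only [add_zero, add_assoc, add_comm (1 : ℝ)]

lemma sub_mul_poch_neg (a : ℝ) (k : ℕ) : (a - k) * poch (-a) k = a * poch (1 - a) k := by
  have h := (poch_succ (-a) k).symm.trans (poch_succ' (-a) k)
  rw [neg_add_eq_sub, show -a + 1 = 1 - a by ring] at h
  linear_combination -h

lemma poch_neg_natCast_eq_zero {n k : ℕ} (h : n < k) : poch (-n) k = 0 :=
  prod_eq_zero (mem_range.mpr h) (neg_add_cancel _)

lemma mul_deriv_sum_pow {𝕜 : Type*} [NontriviallyNormedField 𝕜] (c : ℕ → 𝕜) (s : Finset ℕ)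
    (z : 𝕜) : z * deriv (fun w ↦ ∑ k ∈ s, c k * w ^ k) z = ∑ k ∈ s, k * c k * z ^ k := by
  rw [deriv_fun_sum fun k _ ↦ (differentiableAt_pow k).const_mul _, mul_sum]
  refine sum_congr rfl fun k _ ↦ ?_
  rw [deriv_const_mul_field, deriv_pow_field]
  cases k with
  | zero => simp
  | succ k => rw [Nat.add_sub_cancel, pow_succ]; ring

noncomputable def hrCoeff (α β : ℝ) (n k : ℕ) : ℝ :=
  poch β n / poch (α + 1) n *
    (poch (-(n : ℝ)) k * poch (α + 1) k / (poch (1 - β - (n : ℝ)) k * (k.factorial : ℝ)))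

lemma HR_eq_sum (α β : ℝ) (n : ℕ) :
    HR α β n = fun z ↦ ∑ k ∈ range (n + 1), hrCoeff α β n k * z ^ k := by
  ext z
  simp only [HR, hrCoeff, mul_sum, mul_assoc]

lemma hrCoeff_eq_zero {α β : ℝ} {n k : ℕ} (h : n < k) : hrCoeff α β n k = 0 := by
  simp [hrCoeff, poch_neg_natCast_eq_zero h]

lemma HR_eq_sum_of_lt (α β : ℝ) {n N : ℕ} (h : n < N) (z : ℝ) :
    HR α β n z = ∑ k ∈ range N, hrCoeff α β n k * z ^ k := by
  rw [HR_eq_sum]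
  refine sum_subset (range_subset_range.mpr h) fun k _ hk ↦ ?_
  rw [hrCoeff_eq_zero (by simpa using hk), zero_mul]

lemma sub_mul_hrCoeff (α β : ℝ) (m k : ℕ) :
    ((m : ℝ) + 1 - k) * hrCoeff (β - 1) (α + 1) (m + 1) k
      = (m + 1) * (1 + α) / (m + β) * hrCoeff (β - 1) (α + 2) m k := by
  have hα : poch (α + 1) (m + 1) = (α + 1) * poch (α + 2) m := by
    rw [poch_succ']; ring_nf
  have hβ : poch β (m + 1) = poch β m * (β + m) := poch_succ β m
  have hpoch := sub_mul_poch_neg ((m : ℝ) + 1) k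
  rw [show (1 : ℝ) - (m + 1) = -m by ring] at hpoch
  have hden : 1 - (α + 1) - ((m : ℝ) + 1) = 1 - (α + 2) - m := by ring
  simp only [hrCoeff, sub_add_cancel, hden, hα, hβ, div_mul_eq_div_div, Nat.cast_succ]
  linear_combination (α + 1) * poch (α + 2) m / poch β m / (β + m) * poch β k /
    poch (1 - (α + 2) - m) k / k.factorial * hpoch

theorem stmt5_general (α β : ℝ)
    (n : ℕ) (z : ℝ) :
    z * deriv (HR (β - 1) (α + 1) n) z
      = (n : ℝ) * HR (β - 1) (α + 1) n z
        - (n : ℝ) * (1 + α) / ((n : ℝ) - 1 + β) * HR (β - 1) (α + 2) (n - 1) z := by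
  cases n with
  | zero => simp [HR_eq_sum]
  | succ m =>
    rw [Nat.add_sub_cancel, HR_eq_sum_of_lt _ _ (show m < m + 1 + 1 by omega) z, HR_eq_sum,
      mul_deriv_sum_pow, mul_sum, mul_sum, ← sum_sub_distrib]
    refine sum_congr rfl fun k _ ↦ ?_
    push_cast
    linear_combination (-z ^ k) * sub_mul_hrCoeff α β m k

/-- `z · (d/dz) P_n(z; β−1, α+1) = n · P_n(z; β−1, α+1) − (n(1+α)/(n−1+β)) · P_{n−1}(z; β−1, α+2)`
for `n ≥ 1`. -/
theorem stmt5 (α β : ℝ)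
    (hα : ∀ m : ℤ, α ≠ (m : ℝ)) (hβ : ∀ m : ℤ, β ≠ (m : ℝ))
    (hαβ : ∀ m : ℤ, α + β ≠ (m : ℝ))
    (n : ℕ) (hn : 1 ≤ n) (z : ℝ) :
    z * deriv (HR (β - 1) (α + 1) n) z
      = (n : ℝ) * HR (β - 1) (α + 1) n z
        - (n : ℝ) * (1 + α) / ((n : ℝ) - 1 + β) * HR (β - 1) (α + 2) (n - 1) z :=
  stmt5_general α β n z
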